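/- Let u, φ : Ω̄ → ℝ be continuous on the closure of a bounded domain Ω, C¹ up to the boundary, with u = φ = 0 on ∂Ω, φ > 0 in Ω, and ν·∇φ < 0 on ∂Ω (ν the outward unit normal). Suppose uₙ → cφ in C¹(Ω̄) with c ∈ ℝ and each uₙ = 0 on ∂Ω. Then uₙ/φ → c uniformly on Ω. -/

import Mathlib

open MeasureTheory Filter

open Set Metric Topology in
lemma aux_ball_subset {E : Type*} [NormedAddCommGroup E] [NormedSpace ℝ E]
    {Ω : Set E} (hΩ : IsOpen Ω) {x : E} (hx : x ∈ Ω) :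
    Metric.ball x (Metric.infDist x (frontier Ω)) ⊆ Ω := by
  set r := Metric.infDist x (frontier Ω) with hr
  rcases le_or_gt r 0 with h0 | h0
  · rw [Metric.ball_eq_empty.2 h0]; exact empty_subset _
  have hdisj : ∀ w ∈ Metric.ball x r, w ∉ frontier Ω := by
    intro w hw hwf
    have h1 : r ≤ dist x w := Metric.infDist_le_dist_of_mem hwf
    rw [Metric.mem_ball, dist_comm] at hw
    exact absurd h1 (not_le.2 hw)
  have hsub : Metric.ball x r ⊆ Ω ∪ (closure Ω)ᶜ := by
    intro w hw
    by_cases hwc : w ∈ closure Ω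
    · left
      by_contra hwo
      exact hdisj w hw (by rw [hΩ.frontier_eq]; exact ⟨hwc, hwo⟩)
    · right; exact hwc
  have hpre : IsPreconnected (Metric.ball x r) := (convex_ball x r).isPreconnected
  by_contra hns
  obtain ⟨z, hz, hzo⟩ : ∃ z ∈ Metric.ball x r, z ∉ Ω := by
    simpa [Set.subset_def] using hns
  have hz2 : z ∈ (closure Ω)ᶜ := (hsub hz).resolve_left hzo
  obtain ⟨w, hw⟩ := hpre Ω (closure Ω)ᶜ hΩ isClosed_closure.isOpen_compl hsub
    ⟨x, Metric.mem_ball_self h0, hx⟩ ⟨z, hz, hz2⟩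
  exact hw.2.2 (subset_closure hw.2.1)

open Set Metric Topology in
lemma aux_mvt01 {g g' : ℝ → ℝ} (hc : ContinuousOn g (Set.Icc 0 1))
    (hd : ∀ t ∈ Set.Ioo (0:ℝ) 1, HasDerivAt g (g' t) t) :
    ∃ ξ ∈ Set.Ioo (0:ℝ) 1, g 1 - g 0 = g' ξ := by
  obtain ⟨ξ, hξ, h⟩ := exists_hasDerivAt_eq_slope g g' one_pos hc hd
  exact ⟨ξ, hξ, by rw [h]; ring⟩

open Set Metric Topology in
lemma aux_div {c a b ε : ℝ} (hb : 0 < b) (h : |a - c * b| < ε * b) :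
    dist c (a / b) < ε := by
  rw [Real.dist_eq]
  have : c - a / b = (c * b - a) / b := by field_simp
  rw [this, abs_div, abs_of_pos hb, div_lt_iff₀ hb, abs_sub_comm]
  exact h

open Set Metric Topology in
lemma aux_hasDerivAt_line {E : Type*} [NormedAddCommGroup E] [NormedSpace ℝ E]
    {f : E → ℝ} {L : E →L[ℝ] ℝ} {p w : E} (t : ℝ)
    (hf : HasFDerivAt f L (p + t • w)) :
    HasDerivAt (fun τ : ℝ => f (p + τ • w)) (L w) t := by
  have hline : HasDerivAt (fun τ : ℝ => p + τ • w) w t := by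
    simpa using (((hasDerivAt_id t).smul_const w).const_add p)
  exact hf.comp_hasDerivAt t hline

open Set Metric Topology in
lemma aux_d_pos {E : Type*} [NormedAddCommGroup E] [NormedSpace ℝ E]
    {Ω : Set E} (hΩ : IsOpen Ω) (hfront : (frontier Ω).Nonempty) {x : E} (hx : x ∈ Ω) :
    0 < Metric.infDist x (frontier Ω) := by
  rcases eq_or_lt_of_le (Metric.infDist_nonneg (x := x) (s := frontier Ω)) with h0 | h0
  · exfalso
    have : x ∈ frontier Ω :=
      (IsClosed.mem_iff_infDist_zero isClosed_frontier hfront).2 h0.symm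
    rw [hΩ.frontier_eq] at this
    exact this.2 hx
  · exact h0

-- MVT bound: |ψ x| ≤ M * infDist x (frontier Ω) for x ∈ Ω.

open Set Metric Topology in
lemma aux_bound {E : Type*} [NormedAddCommGroup E] [InnerProductSpace ℝ E]
    [FiniteDimensional ℝ E]
    {Ω : Set E} (hΩopen : IsOpen Ω) (hΩbdd : Bornology.IsBounded Ω)
    (hfront : (frontier Ω).Nonempty)
    {ψ : E → ℝ} (hψc : ContinuousOn ψ (closure Ω))
    (hψd : ∀ z ∈ Ω, DifferentiableAt ℝ ψ z)
    (hψ0 : ∀ z ∈ frontier Ω, ψ z = 0)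
    {M : ℝ} (hM : ∀ z ∈ Ω, ‖fderiv ℝ ψ z‖ ≤ M) :
    ∀ x ∈ Ω, |ψ x| ≤ M * Metric.infDist x (frontier Ω) := by
  intro x hx
  have hfcpt : IsCompact (frontier Ω) :=
    Metric.isCompact_of_isClosed_isBounded isClosed_frontier
      (hΩbdd.closure.subset frontier_subset_closure)
  obtain ⟨y, hy, hyd⟩ := hfcpt.exists_infDist_eq_dist hfront x
  set d := Metric.infDist x (frontier Ω) with hdd
  have hd0 : 0 < d := aux_d_pos hΩopen hfront hx
  have hdist : ‖y - x‖ = d := by rw [hyd, dist_comm, dist_eq_norm]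
  set g : ℝ → ℝ := fun τ => ψ (x + τ • (y - x)) with hg
  have hmemΩ : ∀ τ : ℝ, 0 ≤ τ → τ < 1 → x + τ • (y - x) ∈ Ω := by
    intro τ h0 h1
    refine aux_ball_subset hΩopen hx ?_
    rw [Metric.mem_ball, dist_eq_norm]
    have he : x + τ • (y - x) - x = τ • (y - x) := by abel
    rw [he, norm_smul, hdist, Real.norm_eq_abs, abs_of_nonneg h0]
    calc τ * d < 1 * d := by exact mul_lt_mul_of_pos_right h1 hd0
    _ = d := one_mul d
  have hmemcl : ∀ τ ∈ Set.Icc (0:ℝ) 1, x + τ • (y - x) ∈ closure Ω := by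
    intro τ hτ
    rcases eq_or_lt_of_le hτ.2 with h1 | h1
    · rw [h1, one_smul]
      have : x + (y - x) = y := by abel
      rw [this]
      exact frontier_subset_closure hy
    · exact subset_closure (hmemΩ τ hτ.1 h1)
  have hcont : ContinuousOn g (Set.Icc 0 1) := by
    apply hψc.comp (Continuous.continuousOn (by continuity)) hmemcl
  have hderiv : ∀ τ ∈ Set.Ioo (0:ℝ) 1, HasDerivAt g
      ((fderiv ℝ ψ (x + τ • (y - x))) (y - x)) τ := by
    intro τ hτ
    exact aux_hasDerivAt_line τ ((hψd _ (hmemΩ τ hτ.1.le hτ.2)).hasFDerivAt)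
  obtain ⟨ξ, hξ, hmvt⟩ := aux_mvt01 hcont hderiv
  have hg1 : g 1 = 0 := by
    have : x + (1:ℝ) • (y - x) = y := by rw [one_smul]; abel
    simp only [hg, this]
    exact hψ0 y hy
  have hg0 : g 0 = ψ x := by simp [hg]
  rw [hg1, hg0] at hmvt
  have hξΩ := hmemΩ ξ hξ.1.le hξ.2
  calc |ψ x| = |(fderiv ℝ ψ (x + ξ • (y - x))) (y - x)| := by
        rw [← abs_neg]; congr 1; linarith [hmvt]
    _ ≤ ‖fderiv ℝ ψ (x + ξ • (y - x))‖ * ‖y - x‖ :=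
        (fderiv ℝ ψ (x + ξ • (y - x))).le_opNorm (y - x)
    _ ≤ M * d := by
        rw [hdist]
        exact mul_le_mul_of_nonneg_right (hM _ hξΩ) hd0.le

open Set Metric Topology in
set_option maxHeartbeats 1000000 in
set_option maxHeartbeats 1000000 in

open Set Metric Topology in
set_option maxHeartbeats 1000000 in
lemma aux_lower {E : Type*} [NormedAddCommGroup E] [InnerProductSpace ℝ E]
    [FiniteDimensional ℝ E]
    {Ω : Set E} (hΩopen : IsOpen Ω) (hΩbdd : Bornology.IsBounded Ω)
    (hfront : (frontier Ω).Nonempty)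
    {φ : E → ℝ} (hφ_smooth : ContDiffOn ℝ 1 φ (closure Ω))
    (hφ_cont : ContinuousOn φ (closure Ω))
    (hφ_bd : ∀ x ∈ frontier Ω, φ x = 0) (hφ_pos : ∀ x ∈ Ω, 0 < φ x)
    {ν : E → E} (hν_unit : ∀ x ∈ frontier Ω, ‖ν x‖ = 1)
    (hν_out : ∀ x ∈ frontier Ω, ∃ t₀ > (0:ℝ), ∀ t ∈ Set.Ioo (0:ℝ) t₀, x - t • ν x ∈ Ω)
    (hHopf : ∀ x ∈ frontier Ω, (inner ℝ (ν x) (gradient φ x) : ℝ) < 0) :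
    ∃ a > 0, ∀ x ∈ Ω, a * Metric.infDist x (frontier Ω) ≤ φ x := by
  by_contra hcon
  push_neg at hcon
  choose X hXΩ hXlt using fun k : ℕ => hcon (1/(k+1 : ℝ)) (by positivity)
  have hcls : IsCompact (closure Ω) :=
    Metric.isCompact_of_isClosed_isBounded isClosed_closure hΩbdd.closure
  obtain ⟨y, hycl, g, hgmono, hgtend⟩ := hcls.tendsto_subseq
    (fun k => subset_closure (hXΩ k))
  -- uniform bound on infDist
  obtain ⟨w₀, hw₀⟩ := id hfront
  obtain ⟨R, hR⟩ := hΩbdd.subset_closedBall w₀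
  have hDb : ∀ k, Metric.infDist (X k) (frontier Ω) ≤ max R 0 := by
    intro k
    refine le_trans (Metric.infDist_le_dist_of_mem hw₀) ?_
    exact le_trans (hR (hXΩ k)) (le_max_left _ _)
  -- φ (X (g k)) → 0
  have htend0 : Tendsto (fun k => φ (X (g k))) atTop (𝓝 0) := by
    apply squeeze_zero (fun k => (hφ_pos _ (hXΩ (g k))).le)
      (g := fun k => (1/((g k : ℝ)+1)) * max R 0)
    · intro k
      refine le_trans (hXlt (g k)).le ?_
      apply mul_le_mul_of_nonneg_left (hDb (g k)) (by positivity)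
    · have h1 : Tendsto (fun k : ℕ => 1/((k:ℝ)+1)) atTop (𝓝 0) :=
        tendsto_one_div_add_atTop_nhds_zero_nat
      have := (h1.comp hgmono.tendsto_atTop).mul_const (max R 0)
      simpa using this
  have hφXy : Tendsto (fun k => φ (X (g k))) atTop (𝓝 (φ y)) := by
    refine ((hφ_cont y hycl).tendsto).comp ?_
    exact tendsto_nhdsWithin_iff.2 ⟨hgtend,
      Filter.Eventually.of_forall (fun k => subset_closure (hXΩ (g k)))⟩
  have hφy0 : φ y = 0 := tendsto_nhds_unique hφXy htend0
  have hyfront : y ∈ frontier Ω := by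
    by_cases hyΩ : y ∈ Ω
    · exact absurd hφy0 (hφ_pos y hyΩ).ne'
    · rw [hΩopen.frontier_eq]; exact ⟨hycl, hyΩ⟩
  -- local C¹ data for φ at y
  have h1 : ContDiffWithinAt ℝ (0+1) φ (closure Ω) y := by
    rw [zero_add]; exact hφ_smooth y hycl
  obtain ⟨u, hu, -, F, hFd, hFc0⟩ :=
    (contDiffWithinAt_succ_iff_hasFDerivWithinAt (by simp)).1 h1
  have hFc : ContinuousWithinAt F u y := hFc0.continuousWithinAt
  rw [Set.insert_eq_self.2 hycl] at hu
  obtain ⟨ρ, hρ0, hρsub⟩ := Metric.mem_nhdsWithin_iff.1 hu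
  have hyu : y ∈ u := mem_of_mem_nhdsWithin hycl hu
  -- nearest points on the frontier
  have hfcpt : IsCompact (frontier Ω) :=
    Metric.isCompact_of_isClosed_isBounded isClosed_frontier
      (hΩbdd.closure.subset frontier_subset_closure)
  choose Y hYf hYd using fun k => hfcpt.exists_infDist_eq_dist hfront (X (g k))
  set xx : ℕ → E := fun k => X (g k) with hxx
  set d : ℕ → ℝ := fun k => Metric.infDist (xx k) (frontier Ω) with hd
  have hdpos : ∀ k, 0 < d k := fun k => aux_d_pos hΩopen hfront (hXΩ (g k))
  have hdnorm : ∀ k, ‖xx k - Y k‖ = d k := by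
    intro k; rw [← dist_eq_norm]; exact (hYd k).symm
  set v : ℕ → E := fun k => (d k)⁻¹ • (xx k - Y k) with hv
  have hvnorm : ∀ k, ‖v k‖ = 1 := by
    intro k
    rw [hv]
    rw [norm_smul, hdnorm k, Real.norm_eq_abs, abs_inv, abs_of_pos (hdpos k)]
    exact inv_mul_cancel₀ (hdpos k).ne'
  have hxvk : ∀ k, xx k - Y k = d k • v k := fun k => (smul_inv_smul₀ (hdpos k).ne' _).symm
  have hvv : ∀ k, (inner ℝ (v k) (v k) : ℝ) = 1 := by
    intro k; rw [real_inner_self_eq_norm_sq, hvnorm k]; norm_num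
  have hdist0 : Tendsto (fun k => dist (xx k) y) atTop (𝓝 0) :=
    tendsto_iff_dist_tendsto_zero.1 hgtend
  have hdk_le : ∀ k, d k ≤ dist (xx k) y := fun k => Metric.infDist_le_dist_of_mem hyfront
  have hYdist0 : Tendsto (fun k => dist (Y k) y) atTop (𝓝 0) := by
    apply squeeze_zero (fun k => dist_nonneg) (g := fun k => 2 * dist (xx k) y)
    · intro k
      have h2 : dist (Y k) (xx k) = d k := by rw [dist_comm]; exact (hYd k).symm
      calc dist (Y k) y ≤ dist (Y k) (xx k) + dist (xx k) y := dist_triangle _ _ _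
        _ ≤ 2 * dist (xx k) y := by rw [h2]; linarith [hdk_le k]
    · simpa using hdist0.const_mul 2
  have hFAt : ∀ z ∈ Ω ∩ Metric.ball y ρ, HasFDerivAt φ (F z) z := by
    intro z hz
    refine (hFd z (hρsub ⟨hz.2, subset_closure hz.1⟩)).hasFDerivAt ?_
    exact mem_nhds_iff.2 ⟨Ω ∩ Metric.ball y ρ,
      fun w hw => hρsub ⟨hw.2, subset_closure hw.1⟩, hΩopen.inter Metric.isOpen_ball, hz⟩
  have hFy0 : F y = 0 := by
    have key : ∀ ε > 0, ‖F y‖ ≤ 7 * ε := by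
      intro ε hε
      obtain ⟨δ₀, hδ₀, hδF⟩ := Metric.continuousWithinAt_iff.1 hFc ε hε
      set δ := min δ₀ ρ with hδdef
      have hδpos : 0 < δ := lt_min hδ₀ hρ0
      have hδρ : δ ≤ ρ := min_le_right _ _
      have hδδ₀ : δ ≤ δ₀ := min_le_left _ _
      have hev : ∀ᶠ k in atTop, dist (xx k) y < δ/4 ∧ dist (Y k) y < δ/4 ∧
          1/((g k : ℝ)+1) < ε := by
        filter_upwards [hdist0.eventually (gt_mem_nhds (by linarith : (0:ℝ) < δ/4)),
          hYdist0.eventually (gt_mem_nhds (by linarith : (0:ℝ) < δ/4)),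
          (tendsto_one_div_add_atTop_nhds_zero_nat.comp
            hgmono.tendsto_atTop).eventually (gt_mem_nhds hε)] with k h1 h2 h3
        exact ⟨h1, h2, h3⟩
      obtain ⟨k, hk1, hk2, hk3⟩ := hev.exists
      have hYballρ : Y k ∈ Metric.ball y ρ := by
        rw [Metric.mem_ball]; linarith
      have hYku : Y k ∈ u := hρsub ⟨hYballρ, frontier_subset_closure (hYf k)⟩
      -- (i) MVT along the segment from Y k to xx k
      have hsegΩ : ∀ τ : ℝ, 0 < τ → τ < 1 → Y k + τ • (xx k - Y k) ∈ Ω := by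
        intro τ h0 h1
        apply aux_ball_subset hΩopen (hXΩ (g k))
        rw [Metric.mem_ball, dist_eq_norm]
        have he : Y k + τ • (xx k - Y k) - xx k = (1 - τ) • (Y k - xx k) := by module
        rw [he, norm_smul, Real.norm_eq_abs, abs_of_nonneg (by linarith)]
        have hn : ‖Y k - xx k‖ = d k := by rw [norm_sub_rev]; exact hdnorm k
        rw [hn]
        nlinarith [hdpos k]
      have hsegball : ∀ τ : ℝ, 0 ≤ τ → τ ≤ 1 → Y k + τ • (xx k - Y k) ∈ Metric.ball y δ := by
        intro τ h0 h1
        rw [Metric.mem_ball]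
        have h2 : dist (Y k + τ • (xx k - Y k)) (Y k) ≤ d k := by
          rw [dist_eq_norm, add_sub_cancel_left, norm_smul, Real.norm_eq_abs,
            abs_of_nonneg h0, hdnorm k]
          nlinarith [(hdpos k).le]
        calc dist (Y k + τ • (xx k - Y k)) y
            ≤ dist (Y k + τ • (xx k - Y k)) (Y k) + dist (Y k) y := dist_triangle _ _ _
          _ ≤ d k + δ/4 := by linarith
          _ ≤ dist (xx k) y + δ/4 := by linarith [hdk_le k]
          _ < δ := by linarith
      have hsegcl : ∀ τ ∈ Set.Icc (0:ℝ) 1, Y k + τ • (xx k - Y k) ∈ closure Ω := by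
        intro τ hτ
        rcases eq_or_lt_of_le hτ.1 with h0 | h0
        · rw [← h0, zero_smul, add_zero]
          exact frontier_subset_closure (hYf k)
        rcases eq_or_lt_of_le hτ.2 with h1 | h1
        · rw [h1, one_smul, add_sub_cancel]
          exact subset_closure (hXΩ (g k))
        · exact subset_closure (hsegΩ τ h0 h1)
      obtain ⟨ξ, hξ, hmvt⟩ := aux_mvt01 (g := fun τ => φ (Y k + τ • (xx k - Y k)))
        (g' := fun τ => (F (Y k + τ • (xx k - Y k))) (xx k - Y k))
        (hφ_cont.comp (Continuous.continuousOn (by fun_prop)) hsegcl)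
        (fun τ hτ => aux_hasDerivAt_line τ (hFAt _ ⟨hsegΩ τ hτ.1 hτ.2,
          Metric.ball_subset_ball hδρ (hsegball τ hτ.1.le hτ.2.le)⟩))
      set z := Y k + ξ • (xx k - Y k) with hzdef
      have hzu : z ∈ u := hρsub ⟨Metric.ball_subset_ball hδρ (hsegball ξ hξ.1.le hξ.2.le),
        subset_closure (hsegΩ ξ hξ.1 hξ.2)⟩
      have hmvt2 : φ (xx k) = d k * (F z) (v k) := by
        have hg1 : Y k + (1:ℝ) • (xx k - Y k) = xx k := by module
        have hg0 : Y k + (0:ℝ) • (xx k - Y k) = Y k := by module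
        simp only [hg1, hg0] at hmvt
        rw [hφ_bd (Y k) (hYf k), sub_zero] at hmvt
        rw [hmvt, hxvk k, _root_.map_smul, smul_eq_mul]
      have hFzv : (F z) (v k) < ε := by
        have h5 := hXlt (g k)
        rw [show X (g k) = xx k from rfl, hmvt2] at h5
        have h6 : d k * (F z) (v k) < d k * (1/((g k : ℝ)+1)) := by
          calc d k * (F z) (v k) < 1/((g k : ℝ)+1) * d k := by
                convert h5 using 2
            _ = d k * (1/((g k : ℝ)+1)) := by ring
        have h7 := lt_of_mul_lt_mul_left h6 (hdpos k).le
        linarith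
      -- (ii) half-space positivity at Y k
      have hpos : ∀ w : E, 0 < (inner ℝ (v k) w : ℝ) → 0 ≤ (F (Y k)) w := by
        intro w hcw
        have hw0 : w ≠ 0 := by
          rintro rfl; rw [inner_zero_right] at hcw; exact lt_irrefl 0 hcw
        have hwpos : 0 < ‖w‖ := norm_pos_iff.2 hw0
        set c : ℝ := (inner ℝ (v k) w : ℝ) with hcdef
        set t₁ : ℝ := min (d k * c/(‖w‖^2+1)) ((ρ - dist (Y k) y)/(‖w‖+1)) with ht₁def
        have hρY : 0 < ρ - dist (Y k) y := by
          have : dist (Y k) y < ρ := Metric.mem_ball.1 hYballρ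
          linarith
        have ht₁pos : 0 < t₁ := by
          apply lt_min
          · exact div_pos (mul_pos (hdpos k) hcw) (by positivity)
          · exact div_pos hρY (by positivity)
        have hrayΩ : ∀ t : ℝ, 0 < t → t ≤ t₁ → Y k + t • w ∈ Ω ∩ Metric.ball y ρ := by
          intro t ht0 ht1
          constructor
          · apply aux_ball_subset hΩopen (hXΩ (g k))
            rw [Metric.mem_ball, dist_eq_norm]
            have he : Y k + t • w - xx k = t • w - (d k) • (v k) := by
              rw [← hxvk k]; module
            rw [he]
            have ht1' : t * (‖w‖^2 + 1) ≤ d k * c := by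
              have h8 := le_trans ht1 (min_le_left _ _)
              rw [le_div_iff₀ (by positivity)] at h8
              exact h8
            have hsq : ‖t • w - (d k) • (v k)‖^2 < (d k)^2 := by
              rw [norm_sub_sq_real, norm_smul, norm_smul]
              have hinner : (inner ℝ (t • w) ((d k) • (v k)) : ℝ) = t * d k * c := by
                rw [real_inner_smul_left, real_inner_smul_right, real_inner_comm]
                ring
              rw [hinner]
              simp only [Real.norm_eq_abs, abs_of_pos ht0, abs_of_pos (hdpos k), hvnorm k]
              nlinarith [norm_nonneg w, ht0, hdpos k, hcw]
            nlinarith [norm_nonneg (t • w - (d k) • (v k)), hdpos k]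
          · rw [Metric.mem_ball]
            have h9 : t * (‖w‖ + 1) ≤ ρ - dist (Y k) y := by
              have h8 := le_trans ht1 (min_le_right _ _)
              rw [le_div_iff₀ (by positivity)] at h8
              exact h8
            calc dist (Y k + t • w) y ≤ dist (Y k + t • w) (Y k) + dist (Y k) y :=
                dist_triangle _ _ _
              _ < ρ := by
                  rw [dist_eq_norm, add_sub_cancel_left, norm_smul, Real.norm_eq_abs,
                    abs_of_pos ht0]
                  nlinarith [ht0]
        have hmaps : Set.MapsTo (fun t : ℝ => Y k + t • w) (Set.Icc 0 t₁) u := by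
          intro t ht
          rcases eq_or_lt_of_le ht.1 with h0 | h0
          · simp only [← h0, zero_smul, add_zero]; exact hYku
          · obtain ⟨hA, hB⟩ := hrayΩ t h0 ht.2
            exact hρsub ⟨hB, subset_closure hA⟩
        have hDW : HasDerivWithinAt (fun t : ℝ => φ (Y k + t • w)) ((F (Y k)) w)
            (Set.Icc 0 t₁) 0 := by
          have hline : HasDerivWithinAt (fun t : ℝ => Y k + t • w) w (Set.Icc 0 t₁) 0 := by
            simpa using ((((hasDerivAt_id (0:ℝ)).smul_const w).const_add
              (Y k)).hasDerivWithinAt (s := Set.Icc 0 t₁))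
          have hcomp := (hFd (Y k) hYku).comp_hasDerivWithinAt_of_eq (0:ℝ) hline hmaps
            (by simp)
          exact hcomp
        have hsign : Tendsto (slope (fun t : ℝ => φ (Y k + t • w)) 0)
            (𝓝[Set.Ioc (0:ℝ) t₁] 0) (𝓝 ((F (Y k)) w)) := by
          have h10 := hasDerivWithinAt_iff_tendsto_slope.1 hDW
          have hIcc : Set.Icc (0:ℝ) t₁ \ {0} = Set.Ioc 0 t₁ := by
            ext t
            simp only [Set.mem_diff, Set.mem_Icc, Set.mem_singleton_iff, Set.mem_Ioc]
            constructor
            · rintro ⟨⟨ha, hb⟩, hc⟩; exact ⟨lt_of_le_of_ne ha (Ne.symm hc), hb⟩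
            · rintro ⟨ha, hb⟩; exact ⟨⟨ha.le, hb⟩, ne_of_gt ha⟩
          rwa [hIcc] at h10
        haveI hne : (𝓝[Set.Ioc (0:ℝ) t₁] (0:ℝ)).NeBot := by
          apply mem_closure_iff_nhdsWithin_neBot.1
          rw [closure_Ioc ht₁pos.ne]
          exact ⟨le_refl 0, ht₁pos.le⟩
        refine ge_of_tendsto hsign ?_
        filter_upwards [self_mem_nhdsWithin] with t ht
        have htΩ := (hrayΩ t ht.1 ht.2).1
        have hφp := hφ_pos _ htΩ
        rw [slope_def_field]
        simp only [zero_smul, add_zero, sub_zero]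
        rw [hφ_bd (Y k) (hYf k), sub_zero]
        exact div_nonneg hφp.le ht.1.le
      have hlam0 : 0 ≤ (F (Y k)) (v k) := hpos (v k) (by rw [hvv k]; norm_num)
      -- (iii) operator norm bound
      have hFYnorm : ‖F (Y k)‖ ≤ 2 * (F (Y k)) (v k) := by
        refine ContinuousLinearMap.opNorm_le_bound _ (by linarith) fun w => ?_
        rcases eq_or_ne w 0 with rfl | hw0
        · simp
        have hwpos : 0 < ‖w‖ := norm_pos_iff.2 hw0
        have habs : |(inner ℝ (v k) w : ℝ)| ≤ ‖w‖ := by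
          have h11 := abs_real_inner_le_norm (v k) w
          rwa [hvnorm k, one_mul] at h11
        have hplus : 0 ≤ (F (Y k)) (w + (2*‖w‖) • v k) := by
          apply hpos
          rw [inner_add_right, real_inner_smul_right, hvv k]
          have := abs_le.1 habs
          nlinarith
        have hminus : 0 ≤ (F (Y k)) (-w + (2*‖w‖) • v k) := by
          apply hpos
          rw [inner_add_right, inner_neg_right, real_inner_smul_right, hvv k]
          have := abs_le.1 habs
          nlinarith
        rw [map_add, _root_.map_smul, smul_eq_mul] at hplus
        rw [map_add, map_neg, _root_.map_smul, smul_eq_mul] at hminus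
        rw [Real.norm_eq_abs]
        rw [abs_le]
        constructor <;> nlinarith
      -- (iv) collect the estimates
      have hd1 : dist (F z) (F y) < ε :=
        hδF hzu (lt_of_lt_of_le (Metric.mem_ball.1 (hsegball ξ hξ.1.le hξ.2.le)) hδδ₀)
      have hd2 : dist (F (Y k)) (F y) < ε := hδF hYku (by linarith)
      have hsub1 : ((F (Y k)) - (F z)) (v k) ≤ 2*ε := by
        calc ((F (Y k)) - (F z)) (v k) ≤ |((F (Y k)) - (F z)) (v k)| := le_abs_self _
          _ ≤ ‖(F (Y k)) - (F z)‖ * ‖v k‖ := by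
              rw [← Real.norm_eq_abs]; exact ((F (Y k)) - (F z)).le_opNorm _
          _ = ‖(F (Y k)) - (F z)‖ := by rw [hvnorm k, mul_one]
          _ = dist (F (Y k)) (F z) := (dist_eq_norm _ _).symm
          _ ≤ dist (F (Y k)) (F y) + dist (F y) (F z) := dist_triangle _ _ _
          _ ≤ 2*ε := by rw [dist_comm (F y)]; linarith
      have hlam3 : (F (Y k)) (v k) ≤ 3*ε := by
        have h12 : (F (Y k)) (v k) = (F z) (v k) + ((F (Y k)) - (F z)) (v k) := by
          rw [ContinuousLinearMap.sub_apply]; ring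
        linarith
      calc ‖F y‖ ≤ ‖F (Y k)‖ + dist (F y) (F (Y k)) := by
            have := norm_sub_norm_le (F y) (F (Y k))
            rw [← dist_eq_norm] at this
            linarith
        _ ≤ 2 * (F (Y k)) (v k) + ε := by rw [dist_comm]; linarith
        _ ≤ 7 * ε := by linarith
    have h0 : ‖F y‖ ≤ 0 := by
      by_contra h
      push_neg at h
      have := key (‖F y‖/14) (by linarith)
      linarith
    exact norm_le_zero_iff.1 h0
  -- final contradiction using Hopf at y
  have hdiffy : DifferentiableAt ℝ φ y := by
    by_contra hnd
    have h0 := gradient_eq_zero_of_not_differentiableAt hnd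
    have h2 := hHopf y hyfront
    rw [h0, inner_zero_right] at h2
    exact lt_irrefl 0 h2
  set w : E := -(ν y) with hwdef
  have hwnorm : ‖w‖ = 1 := by rw [hwdef, norm_neg]; exact hν_unit y hyfront
  have hβ : 0 < (fderiv ℝ φ y) w := by
    have h2 := hHopf y hyfront
    have h3 : (inner ℝ (ν y) (gradient φ y) : ℝ) = (fderiv ℝ φ y) (ν y) := by
      rw [real_inner_comm]
      exact InnerProductSpace.toDual_symm_apply
    rw [h3] at h2
    rw [hwdef, map_neg]
    linarith
  have hDA : HasDerivAt (fun t : ℝ => φ (y + t • w)) ((fderiv ℝ φ y) w) 0 := by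
    apply aux_hasDerivAt_line
    simpa using hdiffy.hasFDerivAt
  have hslope : Tendsto (slope (fun t : ℝ => φ (y + t • w)) 0) (𝓝[>] (0:ℝ))
      (𝓝 ((fderiv ℝ φ y) w)) := by
    refine (hasDerivAt_iff_tendsto_slope.1 hDA).mono_left (nhdsWithin_mono 0 ?_)
    intro t ht
    exact ne_of_gt ht
  obtain ⟨t₀, ht₀, hray⟩ := hν_out y hyfront
  have hkey2 : ∀ ε > 0, (fderiv ℝ φ y) w ≤ ε := by
    intro ε hε
    obtain ⟨δ₀, hδ₀, hδF⟩ := Metric.continuousWithinAt_iff.1 hFc ε hε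
    set T := min (min t₀ ρ) δ₀ with hT
    have hTpos : 0 < T := lt_min (lt_min ht₀ hρ0) hδ₀
    have hptΩ : ∀ s : ℝ, 0 < s → s < T → y + s • w ∈ Ω ∩ Metric.ball y ρ := by
      intro s hs0 hsT
      constructor
      · have h5 := hray s ⟨hs0, lt_of_lt_of_le hsT
          (le_trans (min_le_left _ _) (min_le_left _ _))⟩
        have h6 : y + s • w = y - s • ν y := by rw [hwdef, smul_neg, sub_eq_add_neg]
        rwa [h6]
      · rw [Metric.mem_ball, dist_eq_norm, add_sub_cancel_left, norm_smul,
          Real.norm_eq_abs, abs_of_pos hs0, hwnorm, mul_one]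
        exact lt_of_lt_of_le hsT (le_trans (min_le_left _ _) (min_le_right _ _))
    have hev2 : ∀ᶠ t in 𝓝[>] (0:ℝ),
        slope (fun t : ℝ => φ (y + t • w)) 0 t ≤ ε := by
      filter_upwards [Ioo_mem_nhdsGT_of_mem ⟨le_refl (0:ℝ), hTpos⟩] with t ht
      have hscl : ∀ τ : ℝ, y + τ • (t • w) = y + (τ * t) • w := by
        intro τ; rw [smul_smul]
      have hptcl : ∀ τ ∈ Set.Icc (0:ℝ) 1, y + τ • (t • w) ∈ closure Ω := by
        intro τ hτ
        rcases eq_or_lt_of_le hτ.1 with h0 | h0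
        · rw [← h0, zero_smul, add_zero]; exact hycl
        · rw [hscl τ]
          refine subset_closure (hptΩ (τ * t) (mul_pos h0 ht.1) ?_).1
          exact lt_of_le_of_lt (mul_le_of_le_one_left ht.1.le hτ.2) ht.2
      obtain ⟨ξ, hξ, hmvt⟩ := aux_mvt01 (g := fun τ => φ (y + τ • (t • w)))
        (g' := fun τ => (F (y + τ • (t • w))) (t • w))
        (hφ_cont.comp (Continuous.continuousOn (by fun_prop)) hptcl)
        (fun τ hτ => aux_hasDerivAt_line τ (by
          rw [hscl τ]
          exact hFAt _ (hptΩ (τ * t) (mul_pos hτ.1 ht.1)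
            (lt_of_le_of_lt (mul_le_of_le_one_left ht.1.le hτ.2.le) ht.2))))
      have hmvt3 : φ (y + t • w) = t * (F (y + ξ • (t • w))) w := by
        have hg1 : y + (1:ℝ) • (t • w) = y + t • w := by rw [one_smul]
        have hg0 : y + (0:ℝ) • (t • w) = y := by rw [zero_smul, add_zero]
        simp only [hg1, hg0] at hmvt
        rw [hφy0, sub_zero] at hmvt
        rw [hmvt, _root_.map_smul, smul_eq_mul]
      set zz := y + ξ • (t • w) with hzz
      have hzzmem : zz ∈ Ω ∩ Metric.ball y ρ := by
        rw [hzz, hscl ξ]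
        exact hptΩ (ξ * t) (mul_pos hξ.1 ht.1)
          (lt_of_le_of_lt (mul_le_of_le_one_left ht.1.le hξ.2.le) ht.2)
      have hzzu : zz ∈ u := hρsub ⟨hzzmem.2, subset_closure hzzmem.1⟩
      have hzzd : dist zz y < δ₀ := by
        rw [hzz, hscl ξ, dist_eq_norm, add_sub_cancel_left, norm_smul,
          Real.norm_eq_abs, hwnorm, mul_one]
        rw [abs_of_pos (mul_pos hξ.1 ht.1)]
        exact lt_trans (mul_lt_of_lt_one_left ht.1 hξ.2)
          (lt_of_lt_of_le ht.2 (min_le_right _ _))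
      have hFzz : ‖F zz‖ < ε := by
        have h13 := hδF hzzu hzzd
        rwa [dist_eq_norm, hFy0, sub_zero] at h13
      rw [slope_def_field]
      simp only [zero_smul, add_zero, sub_zero]
      rw [hφy0, sub_zero, hmvt3]
      have ht0' : t ≠ 0 := ne_of_gt ht.1
      rw [mul_comm, mul_div_assoc, div_self ht0', mul_one]
      calc (F zz) w ≤ |(F zz) w| := le_abs_self _
        _ ≤ ‖F zz‖ * ‖w‖ := by rw [← Real.norm_eq_abs]; exact (F zz).le_opNorm w
        _ = ‖F zz‖ := by rw [hwnorm, mul_one]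
        _ ≤ ε := hFzz.le
    exact le_of_tendsto hslope hev2
  have h14 := hkey2 ((fderiv ℝ φ y) w / 2) (by linarith)
  linarith

/-- Hopf-type ratio convergence: if `uₙ → cφ` in `C¹(Ω̄)`, all functions vanish on `∂Ω`,
`φ > 0` in `Ω` with `ν·∇φ < 0` on `∂Ω`, then `uₙ/φ → c` uniformly on `Ω`. -/
theorem stmt9 {N : ℕ} (Ω : Set (EuclideanSpace ℝ (Fin N)))
    (hΩopen : IsOpen Ω) (hΩbdd : Bornology.IsBounded Ω)
    (φ : EuclideanSpace ℝ (Fin N) → ℝ) (u : ℕ → EuclideanSpace ℝ (Fin N) → ℝ) (c : ℝ)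
    (ν : EuclideanSpace ℝ (Fin N) → EuclideanSpace ℝ (Fin N))
    (hφ_smooth : ContDiffOn ℝ 1 φ (closure Ω)) (hφ_cont : ContinuousOn φ (closure Ω))
    (hu_smooth : ∀ n, ContDiffOn ℝ 1 (u n) (closure Ω))
    (hu_cont : ∀ n, ContinuousOn (u n) (closure Ω))
    (hφ_bd : ∀ x ∈ frontier Ω, φ x = 0)
    (hu_bd : ∀ n, ∀ x ∈ frontier Ω, u n x = 0)
    (hφ_pos : ∀ x ∈ Ω, 0 < φ x)
    (hν_unit : ∀ x ∈ frontier Ω, ‖ν x‖ = 1)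
    (hν_out : ∀ x ∈ frontier Ω, ∃ t₀ > (0 : ℝ), ∀ t ∈ Set.Ioo (0 : ℝ) t₀, x - t • ν x ∈ Ω)
    (hHopf : ∀ x ∈ frontier Ω, (inner ℝ (ν x) (gradient φ x) : ℝ) < 0)
    (hC0 : TendstoUniformlyOn (fun n x => u n x) (fun x => c * φ x) atTop (closure Ω))
    (hC1 : TendstoUniformlyOn (fun n x => gradient (u n) x) (fun x => c • gradient φ x)
      atTop (closure Ω)) :
    TendstoUniformlyOn (fun n x => u n x / φ x) (fun _ => c) atTop Ω := by
  classical
  rw [Metric.tendstoUniformlyOn_iff]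
  intro ε hε
  rcases Set.eq_empty_or_nonempty Ω with hΩe | hΩne
  · filter_upwards with n x hx
    rw [hΩe] at hx
    exact absurd hx (Set.notMem_empty x)
  by_cases hfront : (frontier Ω).Nonempty
  · -- main case
    obtain ⟨a, ha, hlow⟩ := aux_lower hΩopen hΩbdd hfront hφ_smooth hφ_cont hφ_bd
      hφ_pos hν_unit hν_out hHopf
    have hC1' := (Metric.tendstoUniformlyOn_iff.1 hC1) (ε/2 * a) (by positivity)
    filter_upwards [hC1'] with n hn x hx
    have hud : ∀ z ∈ Ω, DifferentiableAt ℝ (u n) z := by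
      intro z hz
      exact ((hu_smooth n).differentiableOn one_ne_zero).differentiableAt
        (mem_of_superset (hΩopen.mem_nhds hz) subset_closure)
    have hφd : ∀ z ∈ Ω, DifferentiableAt ℝ φ z := by
      intro z hz
      exact (hφ_smooth.differentiableOn one_ne_zero).differentiableAt
        (mem_of_superset (hΩopen.mem_nhds hz) subset_closure)
    set ψ : EuclideanSpace ℝ (Fin N) → ℝ := fun z => u n z - c * φ z with hψ
    have hψc : ContinuousOn ψ (closure Ω) :=
      (hu_cont n).sub (continuousOn_const.mul hφ_cont)
    have hψd : ∀ z ∈ Ω, DifferentiableAt ℝ ψ z := fun z hz =>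
      (hud z hz).sub ((hφd z hz).const_mul c)
    have hψ0 : ∀ z ∈ frontier Ω, ψ z = 0 := by
      intro z hz
      rw [hψ]
      simp only [hu_bd n z hz, hφ_bd z hz, mul_zero, sub_zero]
    have hM : ∀ z ∈ Ω, ‖fderiv ℝ ψ z‖ ≤ ε/2 * a := by
      intro z hz
      have h1 : fderiv ℝ ψ z = fderiv ℝ (u n) z - c • fderiv ℝ φ z := by
        rw [hψ]
        rw [fderiv_fun_sub (hud z hz) ((hφd z hz).const_mul c), fderiv_const_mul (hφd z hz) c]
      have h2 : gradient (u n) z - c • gradient φ z =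
          (InnerProductSpace.toDual ℝ (EuclideanSpace ℝ (Fin N))).symm
            (fderiv ℝ (u n) z - c • fderiv ℝ φ z) := by
        rw [map_sub, _root_.map_smul]
        rfl
      have h3 : ‖fderiv ℝ ψ z‖ = ‖gradient (u n) z - c • gradient φ z‖ := by
        rw [h1, h2, LinearIsometryEquiv.norm_map]
      have h4 := hn z (subset_closure hz)
      rw [dist_eq_norm, ← norm_sub_rev] at h4
      rw [h3]
      exact h4.le
    have hb := aux_bound hΩopen hΩbdd hfront hψc hψd hψ0 hM x hx
    have hφx := hφ_pos x hx
    apply aux_div hφx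
    have h5 := hlow x hx
    have h6 : Metric.infDist x (frontier Ω) ≤ φ x / a := by
      rw [le_div_iff₀ ha]
      linarith [h5]
    calc |u n x - c * φ x| ≤ ε/2*a * Metric.infDist x (frontier Ω) := hb
      _ ≤ ε/2*a * (φ x / a) := by
          apply mul_le_mul_of_nonneg_left h6 (by positivity)
      _ = ε/2 * φ x := by field_simp
      _ < ε * φ x := by nlinarith
  · -- frontier is empty : Ω is compact
    have hfe : frontier Ω = ∅ := Set.not_nonempty_iff_eq_empty.1 hfront
    have hcls_eq : closure Ω = Ω := by
      rw [closure_eq_interior_union_frontier, hΩopen.interior_eq, hfe, Set.union_empty]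
    have hcpt : IsCompact Ω := by
      rw [← hcls_eq]
      exact Metric.isCompact_of_isClosed_isBounded isClosed_closure hΩbdd.closure
    obtain ⟨x₀, hx₀, hmin⟩ := hcpt.exists_isMinOn hΩne (hφ_cont.mono subset_closure)
    have hm : 0 < φ x₀ := hφ_pos x₀ hx₀
    have hC0' := (Metric.tendstoUniformlyOn_iff.1 hC0) (ε * φ x₀) (by positivity)
    filter_upwards [hC0'] with n hn x hx
    apply aux_div (hφ_pos x hx)
    have h2 := hn x (subset_closure hx)
    calc |u n x - c * φ x| = dist (c * φ x) (u n x) := by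
          rw [dist_comm, Real.dist_eq]
      _ < ε * φ x₀ := h2
      _ ≤ ε * φ x := mul_le_mul_of_nonneg_left (hmin hx) hε.le
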